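/- Let τ ≥ ω₁ be a regular initial ordinal and let σ, λ be initial ordinals with ω ≤ λ < σ ≤ τ. Then there is no continuous injective map f : c₀(Γ_σ) → M_{τλ} such that f(0) = 0 and f(x) ∈ M_{τλ} \ C_p([0, τ·λ]) for every x ≠ 0. Equivalently: every injective map f : c₀(Γ_σ) → M_{τλ} with f(0) = 0 and f(x) discontinuous (as a function on [0,τ·λ]) for all x ≠ 0 fails to be continuous. -/

import Mathlib

/-!
Send the unit vectors `e_α` (`α < σ`) through `f`. Each `f e_α` is discontinuous at a point of
cofinality `≥ τ`, hence at a multiple `τ·q` with `q ≤ λ`, where it oscillates by at least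
`1/(n+1)`. Since `|λ|·ℵ₀ < |σ|`, infinitely many `e_{α_k}` share `q` and `n`. They tend to `0`
in `c₀(Γ_σ)`, so `f e_{α_k} → 0` pointwise; for large `k` this makes `|f e_{α_k}|` at least
`δ/2 = 1/(2n+2)` at points cofinal below `τ·q`. As `cf(τ·q) > ω`, interleaving these points for
all `k` gives a sequence whose supremum `R < τ·q` has cofinality `ω`. Every `f e_{α_k}` is
continuous at `R`, so `|f e_{α_k}(R)| ≥ δ/2` for all large `k`, contradicting convergence at `R`.
-/

/-- A regular (initial) ordinal: an ordinal equal to its own cofinality. -/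
def IsRegularOrdinal (o : Ordinal) : Prop := o.cof.ord = o

/-- `M_{τλ}`: the set of functions `x : [0, τ·λ] → ℝ` that are continuous at every
point `t` with `cf(t) < τ`; as a subtype it carries the subspace topology of the
product topology on `ℝ^[0,τ·λ]`. -/
def MSet (τ lam : Ordinal) : Set (Set.Iic (τ * lam) → ℝ) :=
  {x | ∀ t : Set.Iic (τ * lam), ((t : Ordinal).cof.ord < τ) → ContinuousAt x t}

/-- `c₀(Γ_σ)`: the functions on the discrete set `Γ_σ` of ordinals `< σ` such that
`{t : |x t| ≥ ε}` is finite for every `ε > 0`; as a subtype it carries the topology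
of pointwise convergence inherited from `ℝ^{Γ_σ}`. -/
def c0Set (σ : Ordinal) : Set (Set.Iio σ → ℝ) :=
  {x | ∀ ε : ℝ, 0 < ε → {t : Set.Iio σ | ε ≤ |x t|}.Finite}

open Filter Topology Set Cardinal

universe u

namespace Ordinal

theorem mod_eq_zero_of_le_ord_cof {τ t : Ordinal} (hτ : τ ≠ 0) (ht : τ ≤ t.cof.ord) :
    t % τ = 0 := by
  by_contra hm
  have hlt : (t % τ).cof.ord < τ := (ord_cof_le _).trans_lt (mod_lt t hτ)
  rw [← cof_add (τ * (t / τ)) hm, div_add_mod] at hlt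
  exact hlt.not_ge ht

theorem injOn_div_of_le_ord_cof {τ : Ordinal} (hτ : τ ≠ 0) :
    InjOn (· / τ) {t : Ordinal | τ ≤ t.cof.ord} := by
  intro s hs t ht hst
  rw [← div_add_mod s τ, ← div_add_mod t τ, mod_eq_zero_of_le_ord_cof hτ hs,
    mod_eq_zero_of_le_ord_cof hτ ht]
  simp only at hst
  rw [hst]

theorem mk_Iic_prod_nat_lt_mk_Iio {lam σ : Ordinal.{u}} (hσ : σ.IsInitial) (h1 : ω ≤ lam)
    (h2 : lam < σ) : #(Iic lam × ℕ) < #(Iio σ) := by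
  have hinf : ℵ₀ ≤ #(Iio lam) := by
    rw [Cardinal.mk_Iio_ordinal, aleph0_le_lift, ← card_omega0]
    exact card_le_card h1
  have hIic : #(Iic lam) = #(Iio lam) := by
    rw [← Iio_insert, mk_insert self_notMem_Iio, add_one_eq hinf]
  rw [mk_prod, Cardinal.lift_uzero, mk_nat, Cardinal.lift_aleph0, hIic, mul_aleph0_eq hinf,
    Cardinal.mk_Iio_ordinal, Cardinal.mk_Iio_ordinal, Cardinal.lift_lt]
  exact hσ.card_lt_card.2 h2

theorem cof_iSup_nat {f : ℕ → Ordinal.{u}} (hf : StrictMono f) : (⨆ i, f i).cof = ℵ₀ := by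
  have := lift_cof_iSup hf
  rwa [Order.cof_eq_aleph0, lift_aleph0, lift_eq_aleph0] at this

theorem iSup_nat_lt_of_aleph0_lt_cof {f : ℕ → Ordinal.{u}} {a : Ordinal.{u}} (ha : ℵ₀ < a.cof)
    (hf : ∀ i, f i < a) : ⨆ i, f i < a :=
  lift_iSup_lt_of_lt_cof (by simpa using ha) hf

theorem exists_cof_eq_aleph0_forall_mem_closure {t : Ordinal.{u}} (ht : ℵ₀ < t.cof)
    {S : ℕ → Set Ordinal.{u}} (hS : ∀ k, ∀ s < t, ∃ r ∈ S k, s < r ∧ r < t) :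
    ∃ R < t, R.cof = ℵ₀ ∧ ∀ k, R ∈ closure (S k) := by
  choose F hFS hF₁ hF₂ using hS
  have ht₀ : 0 < t := cof_pos.1 (aleph0_pos.trans ht)
  -- Step `j + 1` lands in `S j.unpair.2`, so each `S k` is hit along the cofinal subsequence
  -- `Nat.pair m k + 1`.
  let ρ : ℕ → Iio t := fun j =>
    Nat.rec ⟨0, ht₀⟩ (fun j p => ⟨F j.unpair.2 p p.2, hF₂ _ _ p.2⟩) j
  have hρ : StrictMono fun j => (ρ j).1 :=
    strictMono_nat_of_lt_succ fun j => hF₁ j.unpair.2 (ρ j).1 (ρ j).2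
  refine ⟨⨆ j, (ρ j).1, iSup_nat_lt_of_aleph0_lt_cof ht fun j => (ρ j).2,
    cof_iSup_nat hρ, fun k => ?_⟩
  have hlim : Tendsto (fun j => (ρ j).1) atTop (𝓝 (⨆ j, (ρ j).1)) :=
    tendsto_atTop_ciSup hρ.monotone bddAbove_of_small
  have hsub : Tendsto (fun m => Nat.pair m k + 1) atTop atTop :=
    tendsto_atTop_mono (fun m => (Nat.left_le_pair m k).trans (Nat.le_succ _)) tendsto_id
  refine mem_closure_of_tendsto (hlim.comp hsub) (Eventually.of_forall fun m => ?_)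
  have := hFS k (ρ (Nat.pair m k)).1 (ρ (Nat.pair m k)).2
  simpa [ρ, Nat.unpair_pair] using this

end Ordinal

theorem Cardinal.exists_injective_nat_forall_eq_of_mk_lt {α β : Type u} [Infinite β] (Φ : α → β)
    (h : #β < #α) : ∃ s : ℕ → α, Function.Injective s ∧ ∀ k, Φ (s k) = Φ (s 0) := by
  obtain ⟨b, hb⟩ := exists_infinite_fiber' Φ h
  let e := Infinite.natEmbedding (Φ ⁻¹' {b})
  refine ⟨fun k => e k, fun i j hij => e.injective (Subtype.ext hij), fun k => ?_⟩
  rw [(e k).2, (e 0).2]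

theorem tendsto_pi_single_of_injective {ι M : Type*} [DecidableEq ι] [Zero M] [TopologicalSpace M]
    {s : ℕ → ι} (hs : Function.Injective s) (c : M) :
    Tendsto (fun k => (Pi.single (s k) c : ι → M)) atTop (𝓝 0) := by
  refine tendsto_pi_nhds.2 fun i => tendsto_const_nhds.congr' ?_
  have hne : ∀ᶠ k in atTop, s k ≠ i := by
    rw [← Nat.cofinite_eq_atTop]
    exact hs.tendsto_cofinite.eventually (eventually_cofinite_ne i)
  filter_upwards [hne] with k hk
  rw [Pi.single_apply, if_neg (Ne.symm hk), Pi.zero_apply]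

theorem mem_c0Set_of_finite_support {σ : Ordinal} {x : Iio σ → ℝ}
    (hx : (Function.support x).Finite) : x ∈ c0Set σ := fun _ hε =>
  hx.subset fun _ ht => abs_pos.1 (hε.trans_le ht)

theorem exists_frequently_le_dist_of_not_continuous {τ lam : Ordinal} {x : Iic (τ * lam) → ℝ}
    (hx : x ∈ MSet τ lam) (hdis : ¬ Continuous x) :
    ∃ (t : Iic (τ * lam)) (n : ℕ), τ ≤ (t : Ordinal).cof.ord ∧
      ∃ᶠ r in 𝓝 t, 1 / ((n : ℝ) + 1) ≤ dist (x r) (x t) := by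
  obtain ⟨t, ht⟩ := not_forall.1 (mt continuous_iff_continuousAt.2 hdis)
  have hcof : τ ≤ (t : Ordinal).cof.ord := not_lt.1 (mt (hx t) ht)
  obtain ⟨ε, hε, hfreq⟩ := not_forall₂.1 (mt Metric.tendsto_nhds.2 ht)
  obtain ⟨n, hn⟩ := exists_nat_one_div_lt hε
  exact ⟨t, n, hcof, (not_eventually.1 hfreq).mono fun r hr => hn.le.trans (not_lt.1 hr)⟩

theorem exists_lt_lt_le_abs_of_frequently_le_dist {a : Ordinal} {t : Iic a} {g : Iic a → ℝ}
    {δ : ℝ} (hosc : ∃ᶠ r in 𝓝 t, δ ≤ dist (g r) (g t)) (hsmall : |g t| < δ / 2)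
    {s : Ordinal} (hs : s < t) : ∃ r : Iic a, s < r ∧ r < t ∧ δ / 2 ≤ |g r| := by
  have hnhds : ∀ᶠ r : Iic a in 𝓝 t, (r : Ordinal) ∈ Ioo s (Order.succ t) :=
    (isOpen_Ioo.preimage continuous_subtype_val).mem_nhds ⟨hs, Order.lt_succ _⟩
  obtain ⟨r, hr, hsr, hrt⟩ := (hosc.and_eventually hnhds).exists
  have hne : r ≠ t := by
    rintro rfl
    rw [dist_self] at hr
    linarith [abs_nonneg (g r)]
  refine ⟨r, hsr, (Order.lt_succ_iff.1 hrt).lt_of_ne (Subtype.coe_ne_coe.2 hne), ?_⟩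
  have := abs_sub (g r) (g t)
  rw [← Real.dist_eq] at this
  linarith

theorem not_tendsto_zero_of_frequently_le_dist {a : Ordinal.{u}} {t : Iic a}
    (ht : ℵ₀ < (t : Ordinal).cof) {g : ℕ → Iic a → ℝ}
    (hg : ∀ k (x : Iic a), (x : Ordinal).cof = ℵ₀ → ContinuousAt (g k) x) {δ : ℝ} (hδ : 0 < δ)
    (hosc : ∀ k, ∃ᶠ r in 𝓝 t, δ ≤ dist (g k r) (g k t)) : ¬ Tendsto g atTop (𝓝 0) := by
  intro hlim
  have hsmall : ∀ x, ∀ᶠ k in atTop, |g k x| < δ / 2 := fun x =>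
    (tendsto_pi_nhds.1 hlim x).abs.eventually (gt_mem_nhds (by simpa using half_pos hδ))
  obtain ⟨K, hK⟩ := eventually_atTop.1 (hsmall t)
  obtain ⟨R, hRt, hRcof, hR⟩ := Ordinal.exists_cof_eq_aleph0_forall_mem_closure ht
    (S := fun k => Subtype.val '' {x : Iic a | δ / 2 ≤ |g (k + K) x|}) fun k s hs => by
      obtain ⟨r, hsr, hrt, hr⟩ := exists_lt_lt_le_abs_of_frequently_le_dist (hosc (k + K))
        (hK _ (Nat.le_add_left K k)) hs
      exact ⟨r, mem_image_of_mem _ hr, hsr, hrt⟩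
  have hRa : R ≤ a := hRt.le.trans t.2
  have hlarge : ∀ k, δ / 2 ≤ |g (k + K) ⟨R, hRa⟩| := fun k =>
    (isClosed_le continuous_const continuous_abs).closure_subset <|
      (hg _ _ hRcof).continuousWithinAt.mem_closure (closure_subtype.2 (hR k)) fun _ hx => hx
  obtain ⟨k, hk⟩ := eventually_atTop.1 (hsmall ⟨R, hRa⟩)
  exact (hk (k + K) (Nat.le_add_right k K)).not_ge (hlarge k)

theorem stmt9_general (τ σ lam : Ordinal) (hτ : (Cardinal.aleph 1).ord ≤ τ) (hσ : σ.IsInitial)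
    (h1 : Ordinal.omega0 ≤ lam) (h2 : lam < σ) :
    ¬ ∃ f : ↥(c0Set σ) → (Set.Iic (τ * lam) → ℝ),
      Continuous f ∧ Function.Injective f ∧ (∀ x, f x ∈ MSet τ lam) ∧
      (∀ x : ↥(c0Set σ), (x : Set.Iio σ → ℝ) = 0 → f x = 0) ∧
      (∀ x : ↥(c0Set σ), (x : Set.Iio σ → ℝ) ≠ 0 → ¬ Continuous (f x)) := by
  rintro ⟨f, hfc, -, hfM, hf0, hfd⟩
  have hτω : Ordinal.omega0 < τ := Ordinal.omega0_lt_omega_one.trans_le (ord_aleph 1 ▸ hτ)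
  have hsingle : ∀ α : Iio σ, (Pi.single α 1 : Iio σ → ℝ) ∈ c0Set σ := fun α =>
    mem_c0Set_of_finite_support ((finite_singleton α).subset Pi.support_single_subset)
  choose T N hT hosc using fun α : Iio σ => exists_frequently_le_dist_of_not_continuous
    (hfM ⟨_, hsingle α⟩) (hfd ⟨_, hsingle α⟩ (by simp))
  obtain ⟨s, hs, hsT⟩ := exists_injective_nat_forall_eq_of_mk_lt
    (fun α => ((⟨T α / τ, Ordinal.div_le_of_le_mul (T α).2⟩ : Iic lam), N α))
    (Ordinal.mk_Iic_prod_nat_lt_mk_Iio hσ h1 h2)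
  simp only [Prod.mk.injEq] at hsT
  have hTs : ∀ k, T (s k) = T (s 0) := fun k => Subtype.ext <|
    Ordinal.injOn_div_of_le_ord_cof (Ordinal.omega0_pos.trans hτω).ne' (hT _) (hT _)
      (congrArg Subtype.val (hsT k).1)
  have hlim : Tendsto (fun k => f ⟨_, hsingle (s k)⟩) atTop (𝓝 0) := by
    have h0 : (0 : Iio σ → ℝ) ∈ c0Set σ := mem_c0Set_of_finite_support (by simp)
    have := (hfc.tendsto ⟨0, h0⟩).comp <| (tendsto_subtype_rng
      (f := fun k => (⟨_, hsingle (s k)⟩ : c0Set σ))).2 (tendsto_pi_single_of_injective hs 1)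
    rwa [hf0 _ rfl] at this
  refine not_tendsto_zero_of_frequently_le_dist
    (aleph0_lt_aleph_one.trans_le (ord_le_ord.1 (hτ.trans (hT (s 0)))))
    (fun k x hx => hfM _ x (by rwa [hx, ord_aleph0])) (Nat.one_div_pos_of_nat (n := N (s 0)))
    (fun k => ?_) hlim
  rw [← hTs k, ← (hsT k).2]
  exact hosc (s k)

/-- Let `τ ≥ ω₁` be a regular initial ordinal and `σ`, `λ` initial ordinals with
`ω ≤ λ < σ ≤ τ`. Then there is no continuous injective `f : c₀(Γ_σ) → M_{τλ}` with
`f 0 = 0` and `f x ∈ M_{τλ} \ C_p([0, τ·λ])` (i.e. `f x` discontinuous) for `x ≠ 0`. -/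
theorem stmt9 (τ σ lam : Ordinal) (hreg : IsRegularOrdinal τ) (hτinit : τ.IsInitial)
    (hτ : (Cardinal.aleph 1).ord ≤ τ) (hσ : σ.IsInitial) (hlam : lam.IsInitial)
    (h1 : Ordinal.omega0 ≤ lam) (h2 : lam < σ) (h3 : σ ≤ τ) :
    ¬ ∃ f : ↥(c0Set σ) → (Set.Iic (τ * lam) → ℝ),
      Continuous f ∧ Function.Injective f ∧ (∀ x, f x ∈ MSet τ lam) ∧
      (∀ x : ↥(c0Set σ), (x : Set.Iio σ → ℝ) = 0 → f x = 0) ∧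
      (∀ x : ↥(c0Set σ), (x : Set.Iio σ → ℝ) ≠ 0 → ¬ Continuous (f x)) :=
  stmt9_general τ σ lam hτ hσ h1 h2
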